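/- The behavior policy μ* reduces the total variance of the PDIS estimator compared with on-policy evaluation: for every initial state distribution p_0 on 𝒮, Var(G^PDIS(τ^{μ*_{0:T−1}}_{0:T−1})) ≤ Var(G^PDIS(τ^{π_{0:T−1}}_{0:T−1})), where both variances include the randomness of S_0 ∼ p_0 and of the respective trajectory distributions. -/

import Mathlib

open Finset

section MDPDefs

variable {S A : Type} [Fintype S] [Fintype A]

/-- State value `v_{π,t}(s)` of policy `π` for reward `r`, with `n` remaining steps at
time `t`; the paper's `v_{π,t}(s)` (horizon `T`) is `vval p r π (T − t) t s`. -/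
noncomputable def vval (p : S → A → S → ℝ) (r : S → A → ℝ) (π : ℕ → S → A → ℝ) :
    ℕ → ℕ → S → ℝ
  | 0, _, _ => 0
  | n + 1, t, s => ∑ a, π t s a * (r s a + ∑ s', p s a s' * vval p r π n (t + 1) s')

/-- Action value `q_{π,t}(s,a) = r(s,a) + ∑_{s'} p(s'|s,a) v_{π,t+1}(s')`, where `n`
steps remain after the current one; the paper's `q_{π,t}` is `qval p r π (T − t − 1) t`. -/
noncomputable def qval (p : S → A → S → ℝ) (r : S → A → ℝ) (π : ℕ → S → A → ℝ)
    (n t : ℕ) (s : S) (a : A) : ℝ :=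
  r s a + ∑ s', p s a s' * vval p r π n (t + 1) s'

/-- `ν_{π,t}(s,a) = Var_{s' ∼ p(·|s,a)}(v_{π,t+1}(s'))`, with `n = T − t − 1`
remaining steps after the current one (in particular `ν_{π,T−1} ≡ 0` since `v_{π,T} ≡ 0`). -/
noncomputable def nuVar (p : S → A → S → ℝ) (r : S → A → ℝ) (π : ℕ → S → A → ℝ)
    (n t : ℕ) (s : S) (a : A) : ℝ :=
  (∑ s', p s a s' * (vval p r π n (t + 1) s') ^ 2)
    - (∑ s', p s a s' * vval p r π n (t + 1) s') ^ 2

/-- Probability, under behavior policy `μ`, of the trajectory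
`τ = (A_t, S_{t+1}, A_{t+1}, …, S_{t+n})` of `n` steps starting from state `s` at
time `t`: actions `A_k ∼ μ_k(·|S_k)` and states `S_{k+1} ∼ p(·|S_k, A_k)`. -/
noncomputable def trajProb (p : S → A → S → ℝ) (μ : ℕ → S → A → ℝ) :
    (n : ℕ) → ℕ → S → (Fin n → A × S) → ℝ
  | 0, _, _, _ => 1
  | n + 1, t, s, τ =>
      μ t s (τ 0).1 * p s (τ 0).1 (τ 0).2 *
        trajProb p μ n (t + 1) (τ 0).2 (fun i => τ i.succ)

/-- PDIS return `G^PDIS(τ^{μ_{t:t+n−1}}_{t:t+n−1}) = ∑_{k=t}^{t+n−1} (∏_{j=t}^{k} ρ_j) R_{k+1}`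
(in its equivalent recursive form) along trajectory `τ` from state `s` at time `t`,
where `ρ_j = π_j(A_j|S_j)/μ_j(A_j|S_j)` and `R_{k+1} = r(S_k, A_k)`. -/
noncomputable def pdis (r : S → A → ℝ) (π μ : ℕ → S → A → ℝ) :
    (n : ℕ) → ℕ → S → (Fin n → A × S) → ℝ
  | 0, _, _, _ => 0
  | n + 1, t, s, τ =>
      π t s (τ 0).1 / μ t s (τ 0).1 *
        (r s (τ 0).1 + pdis r π μ n (t + 1) (τ 0).2 (fun i => τ i.succ))

/-- Conditional expectation `E[f(τ) | S_t = s]` over `n`-step trajectories generated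
by the behavior policy `μ` from state `s` at time `t`. -/
noncomputable def expTraj (p : S → A → S → ℝ) (μ : ℕ → S → A → ℝ) (n t : ℕ) (s : S)
    (f : (Fin n → A × S) → ℝ) : ℝ :=
  ∑ τ : Fin n → A × S, trajProb p μ n t s τ * f τ

/-- Conditional variance `Var(G^PDIS(τ^{μ_{t:T−1}}_{t:T−1}) | S_t = s)` with
`n = T − t` remaining steps. -/
noncomputable def pdisVar (p : S → A → S → ℝ) (r : S → A → ℝ) (π μ : ℕ → S → A → ℝ)
    (n t : ℕ) (s : S) : ℝ :=
  expTraj p μ n t s (fun τ => (pdis r π μ n t s τ) ^ 2)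
    - (expTraj p μ n t s (pdis r π μ n t s)) ^ 2

/-- Conditional variance `Var(G^PDIS(τ^{μ_{t+1:T−1}}_{t+1:T−1}) | S_t = s, A_t = a)`,
where `S_{t+1} ∼ p(·|s,a)` and then the trajectory is generated by `μ` from `S_{t+1}`;
here `n = T − t − 1`. -/
noncomputable def pdisVarSA (p : S → A → S → ℝ) (r : S → A → ℝ) (π μ : ℕ → S → A → ℝ)
    (n t : ℕ) (s : S) (a : A) : ℝ :=
  (∑ s', p s a s' * expTraj p μ n (t + 1) s' (fun τ => (pdis r π μ n (t + 1) s' τ) ^ 2))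
    - (∑ s', p s a s' * expTraj p μ n (t + 1) s' (pdis r π μ n (t + 1) s')) ^ 2

/-- Extended reward `r̃_t(s,a)` (horizon `T`) computed with continuation behavior
policy `μ`: `r̃_{T−1}(s,a) = r(s,a)²`, and for `t ≤ T−2`,
`r̃_t(s,a) = ν_{π,t}(s,a) + q_{π,t}(s,a)² + ∑_{s'} p(s'|s,a) Var(G^PDIS(τ^{μ_{t+1:T−1}}) | S_{t+1} = s')`. -/
noncomputable def rtilde (p : S → A → S → ℝ) (r : S → A → ℝ) (π μ : ℕ → S → A → ℝ)
    (T t : ℕ) (s : S) (a : A) : ℝ :=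
  if t + 1 = T then (r s a) ^ 2
  else
    nuVar p r π (T - t - 1) t s a + (qval p r π (T - t - 1) t s a) ^ 2
      + ∑ s', p s a s' * pdisVar p r π μ (T - t - 1) (t + 1) s'

/-- Total (unconditional) variance `Var(G^PDIS(τ^{μ_{0:T−1}}_{0:T−1}))` of the PDIS
estimator, including the randomness of the initial state `S_0 ∼ p0`. -/
noncomputable def pdisTotalVar (p : S → A → S → ℝ) (r : S → A → ℝ) (π μ : ℕ → S → A → ℝ)
    (p0 : S → ℝ) (T : ℕ) : ℝ :=
  (∑ s, p0 s * expTraj p μ T 0 s (fun τ => (pdis r π μ T 0 s τ) ^ 2))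
    - (∑ s, p0 s * expTraj p μ T 0 s (pdis r π μ T 0 s)) ^ 2

/-- Feasible set of the step-wise constrained problem at time `t` and state `s`:
probability distributions `ν` on `A` satisfying the coverage condition
`ν a = 0 → π_t(a|s) q_{π,t}(s,a) = 0` and the safety constraint
`∑ a, ν a * q^c_{μ*,t}(s,a) ≤ (1 + ε) v^c_{π,t}(s)`. -/
noncomputable def stepFeasible (p : S → A → S → ℝ) (r c : S → A → ℝ)
    (π μstar : ℕ → S → A → ℝ) (T : ℕ) (ε : ℝ) (t : ℕ) (s : S) : Set (A → ℝ) :=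
  {ν | (∀ a, 0 ≤ ν a) ∧ (∑ a, ν a) = 1 ∧
    (∀ a, ν a = 0 → π t s a * qval p r π (T - t - 1) t s a = 0) ∧
    (∑ a, ν a * qval p c μstar (T - t - 1) t s a) ≤ (1 + ε) * vval p c π (T - t) t s}

/-- Objective `∑_{a : ν a > 0} π_t(a|s)² r̃_t(s,a) / ν a` of the step-wise constrained
problem at time `t` and state `s`, where `r̃_t` is computed with continuation policy
`μ*_{t+1:T−1}`. -/
noncomputable def stepObj (p : S → A → S → ℝ) (r : S → A → ℝ) (π μstar : ℕ → S → A → ℝ)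
    (T t : ℕ) (s : S) (ν : A → ℝ) : ℝ :=
  ∑ a ∈ Finset.univ.filter (fun a => 0 < ν a),
    (π t s a) ^ 2 * rtilde p r π μstar T t s a / ν a

end MDPDefs

/-!
Under coverage, PDIS is unbiased: its conditional mean from `(t, s)` is `v_{π,t}(s)` for every
behavior policy. Hence both total variances subtract the same squared mean `(∑ p0 v_{π,0})²`,
and it suffices to compare second moments. One step of the trajectory shows that the second
moment from `(t, s)` under a behavior policy `μ` is exactly the step objective at `μ_t(·|s)`,
with `r̃_t` built from `μ`'s own continuation variances. Backward induction then closes the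
argument: `μ*_t(·|s)` beats `π_t(·|s)` in the step problem (`π` is feasible because the safety
constraints of `μ*` at later times give `v^c_{μ*} ≤ (1 + ε) v^c_π`), and `r̃_t` only grows when
the continuation variances grow, which they do when passing from `μ*` to `π`.
-/

theorem mul_div_sq_mul_eq_ite {m : ℝ} (hm : 0 ≤ m) (q x : ℝ) :
    m * (q / m) ^ 2 * x = if 0 < m then q ^ 2 * x / m else 0 := by
  split_ifs with hpos
  · field_simp
  · rw [le_antisymm (not_lt.mp hpos) hm, zero_mul, zero_mul]

section VarianceReduction

variable {S A : Type} [Fintype S] [Fintype A]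
variable (p : S → A → S → ℝ) (r : S → A → ℝ) (π μ : ℕ → S → A → ℝ)

noncomputable def pdisSecondMoment (n t : ℕ) (s : S) : ℝ :=
  expTraj p μ n t s (fun τ => pdis r π μ n t s τ ^ 2)

structure IsBehaviorPolicy (T : ℕ) : Prop where
  nonneg : ∀ t < T, ∀ s a, 0 ≤ μ t s a
  sum_eq_one : ∀ t < T, ∀ s, ∑ a, μ t s a = 1
  covers : ∀ t < T, ∀ s a, μ t s a = 0 → π t s a * qval p r π (T - t - 1) t s a = 0

theorem isBehaviorPolicy_self (hπ : ∀ t s, (∀ a, 0 ≤ π t s a) ∧ ∑ a, π t s a = 1) (T : ℕ) :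
    IsBehaviorPolicy p r π π T where
  nonneg t _ s := (hπ t s).1
  sum_eq_one t _ s := (hπ t s).2
  covers _ _ _ _ h := by rw [h, zero_mul]

theorem vval_succ (n t : ℕ) (s : S) :
    vval p r π (n + 1) t s = ∑ a, π t s a * qval p r π n t s a := rfl

theorem expTraj_zero (t : ℕ) (s : S) (f : (Fin 0 → A × S) → ℝ) :
    expTraj p μ 0 t s f = f default := by
  simp [expTraj, trajProb]

theorem expTraj_succ (n t : ℕ) (s : S) (f : (Fin (n + 1) → A × S) → ℝ) :
    expTraj p μ (n + 1) t s f
      = ∑ a, ∑ s', μ t s a * p s a s' *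
          expTraj p μ n (t + 1) s' (fun τ => f (Fin.cons (a, s') τ)) := by
  rw [expTraj, ← (Fin.consEquiv fun _ : Fin (n + 1) => A × S).sum_comp, Fintype.sum_prod_type,
    Fintype.sum_prod_type]
  refine sum_congr rfl fun a _ => sum_congr rfl fun s' _ => ?_
  simp only [expTraj, mul_sum, Fin.consEquiv, Equiv.coe_fn_mk, trajProb, Fin.cons_zero,
    Fin.cons_succ]
  exact sum_congr rfl fun τ _ => by ring

theorem expTraj_one (hp : ∀ s a, ∑ s', p s a s' = 1) {T : ℕ}
    (hμ : ∀ t < T, ∀ s, ∑ a, μ t s a = 1) :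
    ∀ n t, t + n ≤ T → ∀ s, expTraj p μ n t s (fun _ => 1) = 1
  | 0, t, _, s => by rw [expTraj_zero]
  | n + 1, t, h, s => by
    simp only [expTraj_succ, expTraj_one hp hμ n (t + 1) (by omega), mul_one, ← mul_sum, hp]
    exact hμ t (by omega) s

section Moments

variable {p μ} {n t : ℕ} {s : S}

theorem expTraj_mul_add (hone : expTraj p μ n t s (fun _ => 1) = 1) (b a : ℝ)
    (g : (Fin n → A × S) → ℝ) :
    expTraj p μ n t s (fun τ => b * (a + g τ)) = b * (a + expTraj p μ n t s g) := by
  have hlin : expTraj p μ n t s (fun τ => b * (a + g τ))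
      = b * (a * expTraj p μ n t s (fun _ => 1) + expTraj p μ n t s g) := by
    simp only [expTraj, mul_sum, ← sum_add_distrib]
    exact sum_congr rfl fun τ _ => by ring
  rw [hlin, hone, mul_one]

theorem expTraj_mul_add_sq (hone : expTraj p μ n t s (fun _ => 1) = 1) (b a : ℝ)
    (g : (Fin n → A × S) → ℝ) :
    expTraj p μ n t s (fun τ => (b * (a + g τ)) ^ 2)
      = b ^ 2 * (a ^ 2 + 2 * a * expTraj p μ n t s g + expTraj p μ n t s (fun τ => g τ ^ 2)) := by
  have hlin : expTraj p μ n t s (fun τ => (b * (a + g τ)) ^ 2)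
      = b ^ 2 * (a ^ 2 * expTraj p μ n t s (fun _ => 1) + 2 * a * expTraj p μ n t s g
          + expTraj p μ n t s (fun τ => g τ ^ 2)) := by
    simp only [expTraj, mul_sum, ← sum_add_distrib]
    exact sum_congr rfl fun τ _ => by ring
  rw [hlin, hone, mul_one]

end Moments

omit [Fintype S] [Fintype A] in
theorem pdis_cons (n t : ℕ) (s s' : S) (a : A) (τ : Fin n → A × S) :
    pdis r π μ (n + 1) t s (Fin.cons (a, s') τ)
      = π t s a / μ t s a * (r s a + pdis r π μ n (t + 1) s' τ) := by
  simp only [pdis, Fin.cons_zero, Fin.cons_succ]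

theorem expTraj_pdis_eq_vval (hp : ∀ s a, ∑ s', p s a s' = 1) {T : ℕ}
    (hμ : IsBehaviorPolicy p r π μ T) :
    ∀ n t, t + n = T → ∀ s, expTraj p μ n t s (pdis r π μ n t s) = vval p r π n t s
  | 0, t, _, s => by rw [expTraj_zero]; rfl
  | n + 1, t, h, s => by
    rw [expTraj_succ, vval_succ]
    refine sum_congr rfl fun a _ => ?_
    have hcov : μ t s a = 0 → π t s a * qval p r π n t s a = 0 := by
      simpa only [show T - t - 1 = n by omega] using hμ.covers t (by omega) s a
    have hone s' := expTraj_one p μ hp hμ.sum_eq_one n (t + 1) (by omega) s'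
    simp only [pdis_cons, expTraj_mul_add (hone _), expTraj_pdis_eq_vval hp hμ n (t + 1) (by omega)]
    calc ∑ s', μ t s a * p s a s' * (π t s a / μ t s a * (r s a + vval p r π n (t + 1) s'))
        = μ t s a * (π t s a / μ t s a * ((∑ s', p s a s') * r s a
            + ∑ s', p s a s' * vval p r π n (t + 1) s')) := by
          simp only [sum_mul, mul_sum, ← sum_add_distrib]
          exact sum_congr rfl fun s' _ => by ring
      _ = π t s a * qval p r π n t s a := by
          rw [hp, one_mul, div_mul_eq_mul_div, ← qval, mul_div_cancel_of_imp' hcov]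

theorem pdisVar_eq (hp : ∀ s a, ∑ s', p s a s' = 1) {T : ℕ} (hμ : IsBehaviorPolicy p r π μ T)
    {n t : ℕ} (h : t + n = T) (s : S) :
    pdisVar p r π μ n t s = pdisSecondMoment p r π μ n t s - vval p r π n t s ^ 2 := by
  rw [pdisVar, expTraj_pdis_eq_vval p r π μ hp hμ n t h, pdisSecondMoment]

theorem rtilde_eq (T t : ℕ) (s : S) (a : A) :
    rtilde p r π μ T t s a = nuVar p r π (T - t - 1) t s a + qval p r π (T - t - 1) t s a ^ 2
      + ∑ s', p s a s' * pdisVar p r π μ (T - t - 1) (t + 1) s' := by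
  rw [rtilde]
  split_ifs with hT
  · rw [show T - t - 1 = 0 by omega]
    simp [nuVar, qval, vval, pdisVar, expTraj_zero, pdis]
  · rfl

theorem pdisSecondMoment_succ_eq_stepObj (hp : ∀ s a, ∑ s', p s a s' = 1) {T : ℕ}
    (hμ : IsBehaviorPolicy p r π μ T) {n t : ℕ} (h : t + (n + 1) = T) (s : S) :
    pdisSecondMoment p r π μ (n + 1) t s = stepObj p r π μ T t s (μ t s) := by
  have hone s' := expTraj_one p μ hp hμ.sum_eq_one n (t + 1) (by omega) s'
  have hn : T - t - 1 = n := by omega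
  rw [pdisSecondMoment, expTraj_succ, stepObj, sum_filter]
  refine sum_congr rfl fun a _ => ?_
  simp only [pdis_cons, expTraj_mul_add_sq (hone _),
    expTraj_pdis_eq_vval p r π μ hp hμ n (t + 1) (by omega)]
  calc ∑ s', μ t s a * p s a s' * ((π t s a / μ t s a) ^ 2 * (r s a ^ 2
        + 2 * r s a * vval p r π n (t + 1) s' + pdisSecondMoment p r π μ n (t + 1) s'))
      = μ t s a * (π t s a / μ t s a) ^ 2 * ((∑ s', p s a s') * r s a ^ 2
          + 2 * r s a * ∑ s', p s a s' * vval p r π n (t + 1) s'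
          + ∑ s', p s a s' * (pdisVar p r π μ n (t + 1) s' + vval p r π n (t + 1) s' ^ 2)) := by
        -- second moment = variance + squared mean, giving the variance terms of `r̃`
        simp only [pdisVar_eq p r π μ hp hμ (show t + 1 + n = T by omega), sub_add_cancel,
          sum_mul, mul_sum, ← sum_add_distrib]
        exact sum_congr rfl fun s' _ => by ring
    _ = μ t s a * (π t s a / μ t s a) ^ 2 * rtilde p r π μ T t s a := by
        rw [rtilde_eq, hn, nuVar, qval]
        simp only [hp, mul_add, sum_add_distrib]
        ring
    _ = _ := mul_div_sq_mul_eq_ite (hμ.nonneg t (by omega) s a) _ _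

theorem rtilde_mono (hp_nonneg : ∀ s a s', 0 ≤ p s a s') {μ' : ℕ → S → A → ℝ} {T t : ℕ} {s : S}
    (hvar : ∀ s', pdisVar p r π μ (T - t - 1) (t + 1) s' ≤ pdisVar p r π μ' (T - t - 1) (t + 1) s')
    (a : A) : rtilde p r π μ T t s a ≤ rtilde p r π μ' T t s a := by
  rw [rtilde_eq, rtilde_eq]
  gcongr with s'
  · exact hp_nonneg s a s'
  · exact hvar s'

theorem stepObj_mono {μ' : ℕ → S → A → ℝ} {T t : ℕ} {s : S}
    (hr : ∀ a, rtilde p r π μ T t s a ≤ rtilde p r π μ' T t s a) (ν : A → ℝ) :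
    stepObj p r π μ T t s ν ≤ stepObj p r π μ' T t s ν := by
  refine sum_le_sum fun a ha => ?_
  gcongr
  · exact (mem_filter.mp ha).2.le
  · exact hr a

theorem qval_le_of_vval_le (hp_nonneg : ∀ s a s', 0 ≤ p s a s')
    (hr : ∀ s a, 0 ≤ r s a) {ε : ℝ} (hε : 0 ≤ ε) {n t : ℕ}
    (hv : ∀ s', vval p r μ n (t + 1) s' ≤ (1 + ε) * vval p r π n (t + 1) s') (s : S) (a : A) :
    qval p r μ n t s a ≤ (1 + ε) * qval p r π n t s a := by
  have hsum : ∑ s', p s a s' * vval p r μ n (t + 1) s'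
      ≤ (1 + ε) * ∑ s', p s a s' * vval p r π n (t + 1) s' := by
    rw [mul_sum]
    exact sum_le_sum fun s' _ => by
      rw [mul_left_comm]; exact mul_le_mul_of_nonneg_left (hv s') (hp_nonneg s a s')
  rw [qval, qval]
  nlinarith [mul_nonneg hε (hr s a)]

section StepProblem

variable {p r} {c : S → A → ℝ} {π μstar : ℕ → S → A → ℝ} {T : ℕ} {ε : ℝ}

theorem isBehaviorPolicy_of_stepFeasible
    (hfeas : ∀ t < T, ∀ s, μstar t s ∈ stepFeasible p r c π μstar T ε t s) :
    IsBehaviorPolicy p r π μstar T where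
  nonneg t ht s := (hfeas t ht s).1
  sum_eq_one t ht s := (hfeas t ht s).2.1
  covers t ht s := (hfeas t ht s).2.2.1

theorem vval_le_of_stepFeasible
    (hfeas : ∀ t < T, ∀ s, μstar t s ∈ stepFeasible p r c π μstar T ε t s) {t : ℕ} (ht : t ≤ T)
    (s : S) : vval p c μstar (T - t) t s ≤ (1 + ε) * vval p c π (T - t) t s := by
  rcases ht.lt_or_eq with ht | rfl
  · calc vval p c μstar (T - t) t s = ∑ a, μstar t s a * qval p c μstar (T - t - 1) t s a := by
          rw [← vval_succ, show T - t - 1 + 1 = T - t by omega]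
      _ ≤ _ := (hfeas t ht s).2.2.2
  · simp [vval]

theorem mem_stepFeasible_self (hp_nonneg : ∀ s a s', 0 ≤ p s a s')
    (hπ : ∀ t s, (∀ a, 0 ≤ π t s a) ∧ ∑ a, π t s a = 1) (hc : ∀ s a, 0 ≤ c s a) (hε : 0 ≤ ε)
    (hfeas : ∀ t < T, ∀ s, μstar t s ∈ stepFeasible p r c π μstar T ε t s) {t : ℕ} (ht : t < T)
    (s : S) : π t s ∈ stepFeasible p r c π μstar T ε t s := by
  refine ⟨(hπ t s).1, (hπ t s).2, fun a h => by rw [h, zero_mul], ?_⟩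
  have hq a : qval p c μstar (T - t - 1) t s a ≤ (1 + ε) * qval p c π (T - t - 1) t s a := by
    refine qval_le_of_vval_le p c π μstar hp_nonneg hc hε (fun s' => ?_) s a
    simpa only [show T - (t + 1) = T - t - 1 by omega] using
      vval_le_of_stepFeasible hfeas (show t + 1 ≤ T by omega) s'
  calc ∑ a, π t s a * qval p c μstar (T - t - 1) t s a
      ≤ ∑ a, π t s a * ((1 + ε) * qval p c π (T - t - 1) t s a) := by
        gcongr with a
        · exact (hπ t s).1 a
        · exact hq a
    _ = (1 + ε) * ∑ a, π t s a * qval p c π (T - t - 1) t s a := by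
        rw [mul_sum]
        exact sum_congr rfl fun a _ => by ring
    _ = (1 + ε) * vval p c π (T - t) t s := by
        rw [← vval_succ, show T - t - 1 + 1 = T - t by omega]

theorem pdisSecondMoment_le_of_stepOptimal (hp : ∀ s a, ∑ s', p s a s' = 1)
    (hp_nonneg : ∀ s a s', 0 ≤ p s a s') (hπ : ∀ t s, (∀ a, 0 ≤ π t s a) ∧ ∑ a, π t s a = 1)
    (hc : ∀ s a, 0 ≤ c s a) (hε : 0 ≤ ε)
    (hopt : ∀ t, t < T → ∀ s,
      μstar t s ∈ stepFeasible p r c π μstar T ε t s ∧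
      ∀ ν ∈ stepFeasible p r c π μstar T ε t s,
        stepObj p r π μstar T t s (μstar t s) ≤ stepObj p r π μstar T t s ν) :
    ∀ n t, t + n = T → ∀ s, pdisSecondMoment p r π μstar n t s ≤ pdisSecondMoment p r π π n t s
  | 0, _, _, _ => le_rfl
  | n + 1, t, h, s => by
    have hfeas t ht s := (hopt t ht s).1
    have hμ := isBehaviorPolicy_of_stepFeasible hfeas
    have hπμ := isBehaviorPolicy_self p r π hπ T
    have hvar s' : pdisVar p r π μstar (T - t - 1) (t + 1) s'
        ≤ pdisVar p r π π (T - t - 1) (t + 1) s' := by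
      rw [show T - t - 1 = n by omega, pdisVar_eq p r π μstar hp hμ (by omega),
        pdisVar_eq p r π π hp hπμ (by omega)]
      exact sub_le_sub_right
        (pdisSecondMoment_le_of_stepOptimal hp hp_nonneg hπ hc hε hopt n (t + 1) (by omega) s') _
    calc pdisSecondMoment p r π μstar (n + 1) t s
        = stepObj p r π μstar T t s (μstar t s) :=
          pdisSecondMoment_succ_eq_stepObj p r π μstar hp hμ h s
      _ ≤ stepObj p r π μstar T t s (π t s) :=
          (hopt t (by omega) s).2 _ (mem_stepFeasible_self hp_nonneg hπ hc hε hfeas (by omega) s)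
      _ ≤ stepObj p r π π T t s (π t s) :=
          stepObj_mono p r π μstar (rtilde_mono p r π μstar hp_nonneg hvar) _
      _ = pdisSecondMoment p r π π (n + 1) t s :=
          (pdisSecondMoment_succ_eq_stepObj p r π π hp hπμ h s).symm

end StepProblem

end VarianceReduction

theorem total_variance_reduction_general
    {S A : Type} [Fintype S] [Fintype A]
    (T : ℕ)
    (p : S → A → S → ℝ) (r c : S → A → ℝ) (π μstar : ℕ → S → A → ℝ)
    (hp : ∀ s a, (∀ s', 0 ≤ p s a s') ∧ (∑ s', p s a s') = 1)
    (hπ : ∀ t s, (∀ a, 0 ≤ π t s a) ∧ (∑ a, π t s a) = 1)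
    (hc : ∀ s a, 0 ≤ c s a)
    (ε : ℝ) (hε : 0 ≤ ε)
    (hopt : ∀ t, t < T → ∀ s,
      μstar t s ∈ stepFeasible p r c π μstar T ε t s ∧
      ∀ ν ∈ stepFeasible p r c π μstar T ε t s,
        stepObj p r π μstar T t s (μstar t s) ≤ stepObj p r π μstar T t s ν)
    (p0 : S → ℝ) (hp0 : (∀ s, 0 ≤ p0 s) ∧ (∑ s, p0 s) = 1) :
    pdisTotalVar p r π μstar p0 T ≤ pdisTotalVar p r π π p0 T := by
  have hsum s a := (hp s a).2
  have hμ := isBehaviorPolicy_of_stepFeasible fun t ht s => (hopt t ht s).1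
  have hπμ := isBehaviorPolicy_self p r π hπ T
  have hmean s : expTraj p μstar T 0 s (pdis r π μstar T 0 s)
      = expTraj p π T 0 s (pdis r π π T 0 s) := by
    rw [expTraj_pdis_eq_vval p r π μstar hsum hμ T 0 (zero_add T),
      expTraj_pdis_eq_vval p r π π hsum hπμ T 0 (zero_add T)]
  simp only [pdisTotalVar, hmean]
  gcongr with s
  · exact hp0.1 s
  · exact pdisSecondMoment_le_of_stepOptimal hsum (fun s a => (hp s a).1) hπ hc hε hopt
      T 0 (zero_add T) s

/-- **Total variance reduction of the safety-constrained optimal behavior policy.**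
In the constrained MDP, fix a safety parameter `ε ≥ 0` and let `μ*` be the behavior
policy defined backward in time as the step-wise optimal solution of the constrained
problem at each `t` and `s`. Then for every initial state distribution `p0` on `S`,
`Var(G^PDIS(τ^{μ*_{0:T−1}})) ≤ Var(G^PDIS(τ^{π_{0:T−1}}))`, where both variances
include the randomness of `S_0 ∼ p0` and of the respective trajectory distributions. -/
theorem total_variance_reduction
    {S A : Type} [Fintype S] [Fintype A]
    (T : ℕ) (hT : 1 ≤ T)
    (p : S → A → S → ℝ) (r c : S → A → ℝ) (π μstar : ℕ → S → A → ℝ)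
    (hp : ∀ s a, (∀ s', 0 ≤ p s a s') ∧ (∑ s', p s a s') = 1)
    (hπ : ∀ t s, (∀ a, 0 ≤ π t s a) ∧ (∑ a, π t s a) = 1)
    (hc : ∀ s a, 0 ≤ c s a)
    (ε : ℝ) (hε : 0 ≤ ε)
    (hopt : ∀ t, t < T → ∀ s,
      μstar t s ∈ stepFeasible p r c π μstar T ε t s ∧
      ∀ ν ∈ stepFeasible p r c π μstar T ε t s,
        stepObj p r π μstar T t s (μstar t s) ≤ stepObj p r π μstar T t s ν)
    (p0 : S → ℝ) (hp0 : (∀ s, 0 ≤ p0 s) ∧ (∑ s, p0 s) = 1) :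
    pdisTotalVar p r π μstar p0 T ≤ pdisTotalVar p r π π p0 T :=
  total_variance_reduction_general T p r c π μstar hp hπ hc ε hε hopt p0 hp0
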